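/- For each fixed φ ∈ (0, π/2), ∫₀^{π} sin φ / (1 - cos²x cos²φ)^{3/2} dx = 2 E(-cot²φ), where E(m) = ∫₀^{π/2} √(1 - m sin²θ) dθ. -/

import Mathlib

/-!
Write `s = sin φ`, `k = cos φ` and `D x = 1 - k² cos² x`. The function
`G x = k² sin x cos x / (s √(D x))`, which comes from differentiating `cos φ · K(cos² φ)`
in `φ`, satisfies `G' = s / D^{3/2} - √D / s` and vanishes at `0` and `π / 2`. So on
`[0, π/2]` the integrand has the same integral as `√D / s = √(1 + cot² φ sin² x)`, the
integrand of `E(-cot² φ)`. The integrand is symmetric about `π / 2`, which accounts for the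
factor `2`.
-/

open Real intervalIntegral

noncomputable def Ell (m : ℝ) : ℝ := ∫ θ in (0 : ℝ)..(π / 2), Real.sqrt (1 - m * Real.sin θ ^ 2)

theorem integral_zero_pi_eq_two_mul_of_symm {f : ℝ → ℝ} (hf : ∀ x, f (π - x) = f x)
    (hint : IntervalIntegrable f MeasureTheory.volume 0 π) :
    ∫ x in (0 : ℝ)..π, f x = 2 * ∫ x in (0 : ℝ)..π / 2, f x := by
  have hπ := pi_pos
  have hmem : π / 2 ∈ Set.uIcc 0 π := Set.mem_uIcc_of_le (by positivity) (by linarith)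
  rw [← integral_add_adjacent_intervals (hint.mono_set (Set.uIcc_subset_uIcc_left hmem))
    (hint.mono_set (Set.uIcc_subset_uIcc_right hmem))]
  have hreflect := integral_comp_sub_left (a := 0) (b := π / 2) f π
  simp only [hf, sub_zero, sub_half] at hreflect
  rw [← hreflect]
  ring

theorem rpow_three_halves_eq_sqrt_pow {a : ℝ} (ha : 0 ≤ a) :
    a ^ ((3 : ℝ) / 2) = √a ^ 3 := by
  rw [rpow_div_two_eq_sqrt _ ha]
  exact_mod_cast rpow_natCast (√a) 3

section

variable {s k : ℝ}

theorem one_sub_cos_sq_mul_pos (hsk : s ^ 2 + k ^ 2 = 1) (hs : s ≠ 0) (x : ℝ) :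
    0 < 1 - cos x ^ 2 * k ^ 2 := by
  have := pow_pos (abs_pos.2 hs) 2
  nlinarith [cos_sq_le_one x, sq_nonneg k, sq_abs s]

theorem hasDerivAt_sin_mul_cos_div_sqrt (hsk : s ^ 2 + k ^ 2 = 1) (hs : s ≠ 0) (x : ℝ) :
    HasDerivAt (fun x => k ^ 2 * (sin x * cos x) / (s * √(1 - cos x ^ 2 * k ^ 2)))
      (s / (1 - cos x ^ 2 * k ^ 2) ^ ((3 : ℝ) / 2) - √(1 - cos x ^ 2 * k ^ 2) / s) x := by
  have hD := one_sub_cos_sq_mul_pos hsk hs x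
  have hsqrt := ((((hasDerivAt_cos x).fun_pow 2).mul_const (k ^ 2)).const_sub 1).sqrt hD.ne'
  have hnum := ((hasDerivAt_sin x).fun_mul (hasDerivAt_cos x)).const_mul (k ^ 2)
  have hu := sqrt_pos.2 hD
  refine (hnum.fun_div (hsqrt.const_mul s) (by positivity)).congr_deriv ?_
  rw [rpow_three_halves_eq_sqrt_pow hD.le]
  set u := √(1 - cos x ^ 2 * k ^ 2)
  have hu2 : u ^ 2 = 1 - cos x ^ 2 * k ^ 2 := sq_sqrt hD.le
  have hsin : sin x ^ 2 = 1 - cos x ^ 2 := by linarith [sin_sq_add_cos_sq x]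
  simp only [Nat.cast_ofNat]
  field_simp
  linear_combination (u ^ 2 + (1 - cos x ^ 2 * k ^ 2) + k ^ 2 * (2 * cos x ^ 2 - 1)) * hu2
    - (k ^ 2 * u ^ 2 + k ^ 4 * cos x ^ 2) * hsin - hsk

theorem continuous_div_one_sub_cos_sq_mul_rpow (hsk : s ^ 2 + k ^ 2 = 1) (hs : s ≠ 0) :
    Continuous fun x => s / (1 - cos x ^ 2 * k ^ 2) ^ ((3 : ℝ) / 2) :=
  continuous_const.div ((by fun_prop : Continuous fun x => 1 - cos x ^ 2 * k ^ 2).rpow_const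
    fun _ => Or.inr (by norm_num)) fun x =>
    (rpow_pos_of_pos (one_sub_cos_sq_mul_pos hsk hs x) _).ne'

theorem integral_div_rpow_three_halves_eq_integral_sqrt_div (hsk : s ^ 2 + k ^ 2 = 1)
    (hs : s ≠ 0) :
    ∫ x in (0 : ℝ)..π / 2, s / (1 - cos x ^ 2 * k ^ 2) ^ ((3 : ℝ) / 2) =
      ∫ x in (0 : ℝ)..π / 2, √(1 - cos x ^ 2 * k ^ 2) / s := by
  have hcont₁ := continuous_div_one_sub_cos_sq_mul_rpow hsk hs
  have hcont₂ : Continuous fun x => √(1 - cos x ^ 2 * k ^ 2) / s := by fun_prop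
  rw [← sub_eq_zero,
    ← integral_sub (hcont₁.intervalIntegrable _ _) (hcont₂.intervalIntegrable _ _),
    integral_eq_sub_of_hasDerivAt (fun x _ => hasDerivAt_sin_mul_cos_div_sqrt hsk hs x)
      ((hcont₁.sub hcont₂).intervalIntegrable _ _)]
  simp

theorem Ell_neg_div_sq (hsk : s ^ 2 + k ^ 2 = 1) (hs : 0 < s) :
    Ell (-(k / s) ^ 2) = ∫ x in (0 : ℝ)..π / 2, √(1 - cos x ^ 2 * k ^ 2) / s := by
  refine integral_congr fun x _ => ?_
  have hsin : sin x ^ 2 = 1 - cos x ^ 2 := by linarith [sin_sq_add_cos_sq x]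
  have h : 1 - -(k / s) ^ 2 * sin x ^ 2 = (1 - cos x ^ 2 * k ^ 2) / s ^ 2 := by
    field_simp
    linear_combination hsk + k ^ 2 * hsin
  simp only [h, sqrt_div' _ (sq_nonneg s), sqrt_sq hs.le]

end

theorem integral_eq_elliptic (φ : ℝ) (hφ : φ ∈ Set.Ioo 0 (π / 2)) :
    (∫ x in (0 : ℝ)..π,
        Real.sin φ / (1 - Real.cos x ^ 2 * Real.cos φ ^ 2) ^ ((3 : ℝ) / 2)) =
      2 * Ell (-(Real.cos φ / Real.sin φ) ^ 2) := by
  have hsin : 0 < sin φ := sin_pos_of_pos_of_lt_pi hφ.1 (by linarith [hφ.2, pi_pos])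
  have hsk : sin φ ^ 2 + cos φ ^ 2 = 1 := sin_sq_add_cos_sq φ
  rw [integral_zero_pi_eq_two_mul_of_symm (fun x => by simp only [cos_pi_sub, neg_sq])
      ((continuous_div_one_sub_cos_sq_mul_rpow hsk hsin.ne').intervalIntegrable _ _),
    integral_div_rpow_three_halves_eq_integral_sqrt_div hsk hsin.ne', Ell_neg_div_sq hsk hsin]
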